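/- arXiv:2512.24124 — 7 statements merged into one kernel-verified Lean document; each statement's English description precedes it below -/
import Mathlib

section
/- Let W ∈ ℝ^{m×n} be a nonzero matrix, b ≥ 1 a natural number, and H ∈ ℝ^{n×n} a symmetric positive semidefinite matrix. Let w_max = max_{i,j}|W_{ij}| and define the round-to-nearest quantization Ŵ elementwise by Ŵ_{ij} = g^{-1}(round(g(W_{ij}))), where g(x) = ((2^b − 1)/2)·(x/w_max + 1), g^{-1}(y) = w_max·(2y/(2^b − 1) − 1), and round maps a real number to a nearest integer. Then tr((Ŵ − W) H (Ŵ − W)ᵀ) ≤ (μ_W² / (2^b − 1)²) · λ_max(H) · ‖W‖_F², where λ_max(H) is the largest eigenvalue of H. -/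
open Matrix

theorem psd_aux {n : ℕ} (H : Matrix (Fin n) (Fin n) ℝ) (hH : H.PosSemidef) (lam : ℝ)
    (hlam : ∀ i, hH.isHermitian.eigenvalues i ≤ lam) :
    (lam • (1 : Matrix (Fin n) (Fin n) ℝ) - H).PosSemidef := by
  set U : Matrix (Fin n) (Fin n) ℝ := (hH.isHermitian.eigenvectorUnitary : Matrix (Fin n) (Fin n) ℝ)
  have hU : U * Uᴴ = 1 := by
    simpa [U, Matrix.star_eq_conjTranspose] using
      (Matrix.mem_unitaryGroup_iff.mp (hH.isHermitian.eigenvectorUnitary).2)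
  have hspec : H = U * diagonal (hH.isHermitian.eigenvalues) * Uᴴ := by
    have := hH.isHermitian.spectral_theorem
    simpa [Matrix.star_eq_conjTranspose, Function.comp] using this
  have hdiag : diagonal (fun i => lam - hH.isHermitian.eigenvalues i)
      = lam • (1 : Matrix (Fin n) (Fin n) ℝ) - diagonal (hH.isHermitian.eigenvalues) := by
    ext i j
    by_cases h : i = j <;> simp [h, Matrix.diagonal, Matrix.one_apply]
  have hkey : lam • (1 : Matrix (Fin n) (Fin n) ℝ) - H
      = U * diagonal (fun i => lam - hH.isHermitian.eigenvalues i) * Uᴴ := by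
    rw [hdiag, Matrix.mul_sub, Matrix.sub_mul, Matrix.mul_smul, Matrix.smul_mul,
      Matrix.mul_one, hU, ← hspec]
  rw [hkey]
  exact (Matrix.PosSemidef.diagonal (fun i => sub_nonneg.2 (hlam i))).mul_mul_conjTranspose_same U


/-- Worst-case error bound for round-to-nearest quantization.
Let `W ∈ ℝ^{m×n}` be nonzero, `b ≥ 1`, `H` symmetric PSD, `wmax = max_{ij} |W i j|`,
`lam` the largest eigenvalue of `H`, and `Ŵ` the `b`-bit RTN quantization of `W`.
Then `tr((Ŵ - W) H (Ŵ - W)ᵀ) ≤ (μ_W² / (2^b − 1)²) · λ_max(H) · ‖W‖_F²`, where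
`μ_W = √(mn)·wmax/‖W‖_F`. -/
theorem stmt0 {m n : ℕ} (W : Matrix (Fin m) (Fin n) ℝ) (hW : W ≠ 0)
    (b : ℕ) (hb : 1 ≤ b)
    (H : Matrix (Fin n) (Fin n) ℝ) (hH : H.PosSemidef)
    (wmax : ℝ)
    (hwmax : IsGreatest (Set.range fun p : Fin m × Fin n => |W p.1 p.2|) wmax)
    (lam : ℝ)
    (hlam : IsGreatest (Set.range hH.isHermitian.eigenvalues) lam)
    (What : Matrix (Fin m) (Fin n) ℝ)
    (hWhat : ∀ i j, What i j =
      wmax * (2 * ((round ((((2:ℝ)^b - 1)/2) * (W i j / wmax + 1)) : ℤ) : ℝ)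
        / ((2:ℝ)^b - 1) - 1)) :
    Matrix.trace ((What - W) * H * (What - W)ᵀ) ≤
      (Real.sqrt (m * n) * wmax / Real.sqrt (∑ i, ∑ j, (W i j)^2))^2 / ((2:ℝ)^b - 1)^2
        * lam * (∑ i, ∑ j, (W i j)^2) := by
  -- basic positivity facts
  have hD : (0:ℝ) < (2:ℝ)^b - 1 := by
    have : (2:ℝ)^1 ≤ (2:ℝ)^b := pow_le_pow_right₀ (by norm_num) hb
    simp at this; linarith
  have hwmax0 : 0 < wmax := by
    obtain ⟨p, hp⟩ := hwmax.1
    rcases lt_or_eq_of_le ((abs_nonneg _).trans hp.le) with h | h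
    · exact h
    · exfalso; apply hW
      ext i j
      have := hwmax.2 ⟨(i, j), rfl⟩
      simp only [← h] at this
      simpa using abs_nonpos_iff.mp (by simpa using this)
  have hS : 0 < ∑ i, ∑ j, (W i j)^2 := by
    have hne : ∃ i j, W i j ≠ 0 := by
      by_contra h; push_neg at h; exact hW (by ext i j; simp [h])
    obtain ⟨i, j, hij⟩ := hne
    have h1 : 0 < ∑ j, (W i j)^2 :=
      Finset.sum_pos' (fun _ _ => sq_nonneg _) ⟨j, Finset.mem_univ _, by positivity⟩
    exact Finset.sum_pos' (fun _ _ => Finset.sum_nonneg fun _ _ => sq_nonneg _)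
      ⟨i, Finset.mem_univ _, h1⟩
  set E : Matrix (Fin m) (Fin n) ℝ := What - W with hE
  -- entrywise bound
  have hent : ∀ i j, (E i j)^2 ≤ (wmax / ((2:ℝ)^b - 1))^2 := by
    intro i j
    set g : ℝ := (((2:ℝ)^b - 1)/2) * (W i j / wmax + 1) with hg
    have hEij : E i j = (2 * wmax / ((2:ℝ)^b - 1)) * ((round g : ℤ) - g) := by
      simp only [hE, Matrix.sub_apply, hWhat i j, hg]
      field_simp
      ring
    have habs : |E i j| ≤ wmax / ((2:ℝ)^b - 1) := by
      rw [hEij, abs_mul]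
      have h1 : |(2 * wmax / ((2:ℝ)^b - 1))| = 2 * wmax / ((2:ℝ)^b - 1) := by
        rw [abs_of_pos]; positivity
      have h2 : |((round g : ℤ) : ℝ) - g| ≤ 1/2 := by
        rw [abs_sub_comm]; exact abs_sub_round g
      calc |(2 * wmax / ((2:ℝ)^b - 1))| * |((round g : ℤ) : ℝ) - g|
          ≤ (2 * wmax / ((2:ℝ)^b - 1)) * (1/2) := by
            rw [h1]; exact mul_le_mul_of_nonneg_left h2 (by positivity)
        _ = wmax / ((2:ℝ)^b - 1) := by ring
    calc (E i j)^2 = |E i j|^2 := (sq_abs _).symm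
      _ ≤ (wmax / ((2:ℝ)^b - 1))^2 := by
          apply pow_le_pow_left₀ (abs_nonneg _) habs
  -- lam bounds eigenvalues, and PSD of lam•1 - H
  have hlam' : ∀ i, hH.isHermitian.eigenvalues i ≤ lam := fun i => hlam.2 ⟨i, rfl⟩
  have hlam0 : 0 ≤ lam := by
    obtain ⟨i, hi⟩ := hlam.1
    exact hi ▸ hH.eigenvalues_nonneg i
  have hM := psd_aux H hH lam hlam'
  -- quadratic form bound per row
  have hrow : ∀ x : Fin n → ℝ, x ⬝ᵥ (H *ᵥ x) ≤ lam * (x ⬝ᵥ x) := by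
    intro x
    have := hM.dotProduct_mulVec_nonneg x
    simp only [Matrix.sub_mulVec, Matrix.smul_mulVec, Matrix.one_mulVec,
      dotProduct_sub, dotProduct_smul, star_trivial, smul_eq_mul] at this
    linarith
  -- trace as sum of row quadratic forms
  have htr : Matrix.trace (E * H * Eᵀ) = ∑ i, (E i) ⬝ᵥ (H *ᵥ (E i)) := by
    simp only [Matrix.trace, Matrix.diag, Matrix.mul_apply, Matrix.transpose_apply,
      dotProduct, Matrix.mulVec, dotProduct]
    refine Finset.sum_congr rfl fun i _ => ?_
    simp_rw [Finset.sum_mul, Finset.mul_sum]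
    rw [Finset.sum_comm]
    exact Finset.sum_congr rfl fun j _ => Finset.sum_congr rfl fun k _ => by ring
  have hfro : ∀ i : Fin m, (E i) ⬝ᵥ (E i) = ∑ j, (E i j)^2 := by
    intro i; simp [dotProduct, sq]
  have step1 : Matrix.trace (E * H * Eᵀ) ≤ lam * ∑ i, ∑ j, (E i j)^2 := by
    rw [htr, Finset.mul_sum]
    refine Finset.sum_le_sum fun i _ => ?_
    rw [← hfro i]
    exact hrow (E i)
  have step2 : ∑ i, ∑ j, (E i j)^2 ≤ (m * n) * (wmax / ((2:ℝ)^b - 1))^2 := by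
    calc (∑ i, ∑ j, (E i j)^2) ≤ ∑ _i : Fin m, ∑ _j : Fin n, (wmax / ((2:ℝ)^b - 1))^2 :=
          Finset.sum_le_sum fun i _ => Finset.sum_le_sum fun j _ => hent i j
      _ = (m * n) * (wmax / ((2:ℝ)^b - 1))^2 := by
          simp [Finset.sum_const]; ring
  -- rewrite RHS
  have hrhs : (Real.sqrt (m * n) * wmax / Real.sqrt (∑ i, ∑ j, (W i j)^2))^2 / ((2:ℝ)^b - 1)^2
        * lam * (∑ i, ∑ j, (W i j)^2)
      = lam * ((m * n) * (wmax / ((2:ℝ)^b - 1))^2) := by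
    rw [div_pow, mul_pow, Real.sq_sqrt (by positivity : (0:ℝ) ≤ (m:ℝ) * n),
      Real.sq_sqrt hS.le]
    field_simp
  rw [hrhs]
  calc Matrix.trace (E * H * Eᵀ) ≤ lam * ∑ i, ∑ j, (E i j)^2 := step1
    _ ≤ lam * ((m * n) * (wmax / ((2:ℝ)^b - 1))^2) :=
        mul_le_mul_of_nonneg_left step2 hlam0
end

section
/- Let H ∈ ℝ^{n×n} be a symmetric positive semidefinite matrix with tr(H) > 0, let H_L be the strictly lower-triangular part of H, let 0 < α ≤ 1, and set L = I − (α/tr(H))·H_L. Then L is unit lower triangular and for every i, the i-th diagonal entry of LᵀL satisfies (LᵀL)_{ii} = 1 + (α²/tr(H)²)·Σ_{k>i} H_{ki}² ≤ 1 + α². -/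
open Matrix

/-- Feasibility of the candidate for the constrained LDL.
For `H` symmetric PSD with `tr H > 0`, `H_L` its strictly lower-triangular part,
`0 < α ≤ 1`, and `L = I − (α/tr H)·H_L`: `L` is unit lower triangular and for every `i`,
`(LᵀL)_{ii} = 1 + (α²/(tr H)²)·Σ_{k>i} H_{ki}² ≤ 1 + α²`. -/
theorem stmt4 {n : ℕ} (H : Matrix (Fin n) (Fin n) ℝ) (hH : H.PosSemidef)
    (htr : 0 < Matrix.trace H) (α : ℝ) (hα0 : 0 < α) (hα1 : α ≤ 1)
    (HL : Matrix (Fin n) (Fin n) ℝ)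
    (hHL : ∀ i j, HL i j = if j < i then H i j else 0)
    (L : Matrix (Fin n) (Fin n) ℝ)
    (hL : L = 1 - (α / Matrix.trace H) • HL) :
    (∀ i, L i i = 1) ∧ (∀ i j : Fin n, i < j → L i j = 0) ∧
      ∀ i, (Lᵀ * L) i i
            = 1 + α^2 / (Matrix.trace H)^2 * ∑ k, (if i < k then (H k i)^2 else 0) ∧
          (Lᵀ * L) i i ≤ 1 + α^2 := by
  set t := Matrix.trace H with ht
  have htne : t ≠ 0 := ne_of_gt htr
  -- diagonal entries nonneg
  have hdiag : ∀ i, 0 ≤ H i i := by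
    intro i
    have := hH.dotProduct_mulVec_nonneg (Pi.single i 1)
    simpa [mulVec, dotProduct, Pi.single_apply] using this
  -- 2x2 minors
  have hminor : ∀ i k : Fin n, i ≠ k → (H k i)^2 ≤ H k k * H i i := by
    intro i k hik
    have key : ∀ x : ℝ, 0 ≤ H k k * (x * x) + (2 * H k i) * x + H i i := by
      intro x
      have := hH.dotProduct_mulVec_nonneg (fun j => (if j = k then x else 0) + (if j = i then 1 else 0))
      have hsym : H i k = H k i := by
        simpa using (hH.1.apply k i)
      simp only [mulVec, dotProduct, mul_add, add_mul, mul_ite, ite_mul, mul_zero, zero_mul,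
        mul_one, one_mul, Finset.sum_add_distrib, Finset.sum_ite_eq', Finset.mem_univ,
        if_true, id_eq, star, Pi.star_apply, star_trivial] at this
      rw [hsym] at this; linarith
    have := discrim_le_zero key
    rw [discrim] at this
    nlinarith [this]
  -- diag entry ≤ trace
  have hdle : ∀ i, H i i ≤ t := by
    intro i
    rw [ht, Matrix.trace]
    have : H i i = ∑ j ∈ {i}, H j j := by simp
    rw [this]
    exact Finset.sum_le_sum_of_subset_of_nonneg (Finset.subset_univ _)
      (fun j _ _ => hdiag j)
  -- sum of off-diag squares is bounded
  have hsumbd : ∀ i, (∑ k, (if i < k then (H k i)^2 else 0)) ≤ t^2 := by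
    intro i
    have h1 : (∑ k, (if i < k then (H k i)^2 else 0))
        ≤ ∑ k, (if i < k then H k k * H i i else 0) := by
      apply Finset.sum_le_sum
      intro k _
      by_cases h : i < k
      · simp only [if_pos h]; exact hminor i k (ne_of_lt h)
      · simp [h]
    have h2 : (∑ k, (if i < k then H k k * H i i else 0)) ≤ t * H i i := by
      have : (∑ k, (if i < k then H k k * H i i else 0))
          = (∑ k, (if i < k then H k k else 0)) * H i i := by
        rw [Finset.sum_mul]
        congr 1; ext k; split <;> simp
      rw [this]
      have hs : (∑ k, (if i < k then H k k else 0)) ≤ t := by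
        rw [ht, Matrix.trace]
        apply Finset.sum_le_sum
        intro k _
        by_cases h : i < k
        · simp [h, Matrix.diag]
        · simp [h, Matrix.diag, hdiag k]
      exact mul_le_mul_of_nonneg_right hs (hdiag i)
    calc (∑ k, (if i < k then (H k i)^2 else 0)) ≤ t * H i i := le_trans h1 h2
      _ ≤ t * t := mul_le_mul_of_nonneg_left (hdle i) (le_of_lt htr)
      _ = t^2 := (sq t).symm
  -- structure of L
  have hLdiag : ∀ i, L i i = 1 := by
    intro i
    simp [hL, hHL, Matrix.one_apply, Matrix.sub_apply, lt_irrefl]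
  have hLup : ∀ i j : Fin n, i < j → L i j = 0 := by
    intro i j hij
    simp [hL, hHL, Matrix.one_apply, Matrix.sub_apply, ne_of_lt hij, not_lt.mpr (le_of_lt hij)]
  refine ⟨hLdiag, hLup, fun i => ?_⟩
  have hentry : ∀ k : Fin n, L k i = (if k = i then 1 else 0)
      - (α / t) * (if i < k then H k i else 0) := by
    intro k
    simp [hL, hHL, Matrix.one_apply, Matrix.sub_apply]
  have hmain : (Lᵀ * L) i i
      = 1 + α^2 / t^2 * ∑ k, (if i < k then (H k i)^2 else 0) := by
    rw [Matrix.mul_apply]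
    have : ∀ k : Fin n, Lᵀ i k * L k i
        = (if k = i then 1 else 0) + α^2 / t^2 * (if i < k then (H k i)^2 else 0) := by
      intro k
      rw [Matrix.transpose_apply, hentry k]
      rcases eq_or_ne k i with rfl | hk
      · simp [lt_irrefl]
      · by_cases h : i < k
        · simp only [if_neg hk, if_pos h]
          field_simp
          ring
        · simp [hk, h]
    rw [Finset.sum_congr rfl (fun k _ => this k), Finset.sum_add_distrib,
      Finset.sum_ite_eq', ← Finset.mul_sum]
    simp
  refine ⟨hmain, ?_⟩
  rw [hmain]
  have h1 : α^2 / t^2 * (∑ k, (if i < k then (H k i)^2 else 0)) ≤ α^2 / t^2 * t^2 := by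
    apply mul_le_mul_of_nonneg_left (hsumbd i)
    positivity
  have h2 : α^2 / t^2 * t^2 = α^2 := by field_simp
  linarith
end

section
/- Let H ∈ ℝ^{n×n} be a symmetric positive semidefinite matrix with τ = tr(H) > 0, let H_L be its strictly lower-triangular part, let 0 ≤ α ≤ 1, and set L₀ = I − (α/τ)·H_L. Then tr(H L₀ᵀ L₀) ≤ tr(H) − (2α − α²)·‖H‖_off²/(2·tr(H)), where ‖H‖_off² = Σ_{i≠j} H_{ij}². -/
open Matrix Finset

lemma psd_diag {n : ℕ} {H : Matrix (Fin n) (Fin n) ℝ} (hH : H.PosSemidef) (i : Fin n) :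
    0 ≤ H i i := by
  have h := hH.dotProduct_mulVec_nonneg (Pi.single i 1)
  simpa [single_dotProduct, mulVec_single] using h

lemma psd_sq_le {n : ℕ} {H : Matrix (Fin n) (Fin n) ℝ} (hH : H.PosSemidef) (i j : Fin n) :
    (H i j)^2 ≤ H i i * H j j := by
  have hsym : H j i = H i j := by
    have := congrFun (congrFun hH.1 i) j
    simpa [conjTranspose_apply] using this
  have key : ∀ t : ℝ, 0 ≤ H i i * (t * t) + (2 * H i j) * t + H j j := by
    intro t
    have h := hH.dotProduct_mulVec_nonneg (t • (Pi.single i 1 : Fin n → ℝ) + Pi.single j 1)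
    simp only [star_trivial, mulVec_add, mulVec_smul, dotProduct_add, add_dotProduct,
      smul_dotProduct, dotProduct_smul, mulVec_single, single_dotProduct, op_smul_eq_mul, col_apply, mul_one, one_mul, smul_eq_mul] at h
    rw [hsym] at h
    have h2 : H i i * (t * t) + 2 * H i j * t + H j j
        = t * (t * H i i + H i j) + (t * H i j + H j j) := by ring
    rw [h2]; exact h
  have := discrim_le_zero key
  rw [discrim] at this
  nlinarith [this]

lemma quad_le {n : ℕ} {H : Matrix (Fin n) (Fin n) ℝ} (hH : H.PosSemidef) (x : Fin n → ℝ) :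
    x ⬝ᵥ H *ᵥ x ≤ Matrix.trace H * ∑ i, (x i)^2 := by
  have hd := psd_diag hH
  have habs : ∀ i j, x i * (H i j * x j)
      ≤ (|x i| * Real.sqrt (H i i)) * (|x j| * Real.sqrt (H j j)) := by
    intro i j
    have h1 : |H i j| ≤ Real.sqrt (H i i) * Real.sqrt (H j j) := by
      rw [← Real.sqrt_mul (hd i)]
      calc |H i j| = Real.sqrt ((H i j)^2) := by rw [Real.sqrt_sq_eq_abs]
        _ ≤ _ := Real.sqrt_le_sqrt (psd_sq_le hH i j)
    calc x i * (H i j * x j) ≤ |x i * (H i j * x j)| := le_abs_self _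
      _ = |x i| * |H i j| * |x j| := by rw [abs_mul, abs_mul]; ring
      _ ≤ |x i| * (Real.sqrt (H i i) * Real.sqrt (H j j)) * |x j| := by
          have := abs_nonneg (x i); have := abs_nonneg (x j); gcongr
      _ = _ := by ring
  calc x ⬝ᵥ H *ᵥ x = ∑ i, ∑ j, x i * (H i j * x j) := by
        simp [dotProduct, mulVec, Finset.mul_sum]
    _ ≤ ∑ i, ∑ j, (|x i| * Real.sqrt (H i i)) * (|x j| * Real.sqrt (H j j)) := by
        refine Finset.sum_le_sum fun i _ => Finset.sum_le_sum fun j _ => habs i j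
    _ = (∑ i, |x i| * Real.sqrt (H i i))^2 := by rw [sq, Finset.sum_mul_sum]
    _ ≤ (∑ i, (|x i|)^2) * (∑ i, (Real.sqrt (H i i))^2) :=
        Finset.sum_mul_sq_le_sq_mul_sq _ _ _
    _ = (∑ i, (x i)^2) * (∑ i, H i i) := by
        simp_rw [sq_abs, Real.sq_sqrt (hd _)]
    _ = Matrix.trace H * ∑ i, (x i)^2 := by rw [Matrix.trace]; simp [Matrix.diag]; ring

/-- Additive bound for the constructive candidate.
For `H` symmetric PSD with `τ = tr H > 0`, `H_L` its strictly lower-triangular part,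
`0 ≤ α ≤ 1`, and `L₀ = I − (α/τ)·H_L`:
`tr(H L₀ᵀ L₀) ≤ tr(H) − (2α − α²)·‖H‖_off²/(2·tr(H))`. -/
theorem stmt7 {n : ℕ} (H : Matrix (Fin n) (Fin n) ℝ) (hH : H.PosSemidef)
    (htr : 0 < Matrix.trace H) (α : ℝ) (hα0 : 0 ≤ α) (hα1 : α ≤ 1)
    (HL : Matrix (Fin n) (Fin n) ℝ)
    (hHL : ∀ i j, HL i j = if j < i then H i j else 0)
    (L₀ : Matrix (Fin n) (Fin n) ℝ)
    (hL₀ : L₀ = 1 - (α / Matrix.trace H) • HL) :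
    Matrix.trace (H * L₀ᵀ * L₀)
      ≤ Matrix.trace H
        - (2*α - α^2) * (∑ i, ∑ j, if i = j then 0 else (H i j)^2)
          / (2 * Matrix.trace H) := by
  have hsym : ∀ i j, H j i = H i j := fun i j => by
    have := congrFun (congrFun hH.1 i) j
    simpa [conjTranspose_apply] using this
  set τ := Matrix.trace H with hτdef
  set c := α / τ with hcdef
  set S := ∑ i, ∑ j, if i = j then 0 else (H i j)^2 with hSdef
  set A := ∑ i, ∑ j, if i < j then (H i j)^2 else (0:ℝ) with hAdef
  set B := ∑ i, ∑ j, if j < i then (H i j)^2 else (0:ℝ) with hBdef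
  -- expansion
  have hexp : H * L₀ᵀ * L₀
      = H - c • (H * HL) - c • (H * HLᵀ) + (c*c) • (H * HLᵀ * HL) := by
    subst hL₀
    rw [transpose_sub, transpose_smul, transpose_one]
    simp only [Matrix.mul_sub, Matrix.sub_mul, Matrix.mul_smul, Matrix.smul_mul,
      Matrix.mul_one, Matrix.one_mul, smul_sub, smul_add, smul_smul, neg_smul, neg_neg]
    abel
  have htrace : Matrix.trace (H * L₀ᵀ * L₀)
      = τ - c * Matrix.trace (H * HL) - c * Matrix.trace (H * HLᵀ)
        + (c*c) * Matrix.trace (H * HLᵀ * HL) := by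
    rw [hexp, Matrix.trace_add, Matrix.trace_sub, Matrix.trace_sub,
      Matrix.trace_smul, Matrix.trace_smul, Matrix.trace_smul, smul_eq_mul,
      smul_eq_mul, smul_eq_mul]
  have hA : Matrix.trace (H * HL) = A := by
    rw [Matrix.trace]
    simp only [Matrix.diag_apply, Matrix.mul_apply, hAdef]
    refine Finset.sum_congr rfl fun i _ => Finset.sum_congr rfl fun k _ => ?_
    rw [hHL]
    split_ifs with h
    · rw [hsym i k]; ring
    · ring
  have hB : Matrix.trace (H * HLᵀ) = B := by
    rw [Matrix.trace]
    simp only [Matrix.diag_apply, Matrix.mul_apply, Matrix.transpose_apply, hBdef]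
    refine Finset.sum_congr rfl fun i _ => Finset.sum_congr rfl fun k _ => ?_
    rw [hHL]
    split_ifs with h
    · ring
    · ring
  have hAB : A + B = S := by
    rw [hAdef, hBdef, hSdef, ← Finset.sum_add_distrib]
    refine Finset.sum_congr rfl fun i _ => ?_
    rw [← Finset.sum_add_distrib]
    refine Finset.sum_congr rfl fun j _ => ?_
    rcases lt_trichotomy i j with h | h | h
    · simp [h, h.ne, not_lt.2 h.le, h.ne']
    · simp [h]
    · simp [h, h.ne, not_lt.2 h.le, h.ne']
  have hABeq : A = B := by
    rw [hAdef, Finset.sum_comm, hBdef]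
    refine Finset.sum_congr rfl fun i _ => Finset.sum_congr rfl fun j _ => ?_
    rw [hsym]
  -- the quadratic term
  have hT : Matrix.trace (H * HLᵀ * HL)
      = ∑ k, (fun i => HL k i) ⬝ᵥ H *ᵥ (fun i => HL k i) := by
    rw [Matrix.trace_mul_cycle]
    simp only [Matrix.trace, Matrix.diag_apply, Matrix.mul_apply,
      Matrix.transpose_apply, dotProduct, mulVec]
    refine Finset.sum_congr rfl fun k _ => ?_
    simp_rw [Finset.sum_mul, Finset.mul_sum]
    rw [Finset.sum_comm]
    refine Finset.sum_congr rfl fun i _ => Finset.sum_congr rfl fun j _ => ?_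
    ring
  have hhalf : ∑ k, ∑ i, (HL k i)^2 = B := by
    rw [hBdef]
    refine Finset.sum_congr rfl fun k _ => Finset.sum_congr rfl fun i _ => ?_
    rw [hHL]
    split_ifs with h
    · rfl
    · exact zero_pow two_ne_zero
  have hTle : Matrix.trace (H * HLᵀ * HL) ≤ τ * B := by
    rw [hT, ← hhalf, Finset.mul_sum]
    exact Finset.sum_le_sum fun k _ => quad_le hH _
  have hc2 : 0 ≤ c * c := mul_self_nonneg c
  have hτne : τ ≠ 0 := ne_of_gt htr
  have hfinal : τ - c * A - c * B + (c*c) * (τ * B) = τ - (2*α - α^2) * S / (2*τ) := by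
    rw [hABeq, ← hAB, hABeq, hcdef]
    field_simp
    ring
  calc Matrix.trace (H * L₀ᵀ * L₀)
      = τ - c * A - c * B + (c*c) * Matrix.trace (H * HLᵀ * HL) := by
        rw [htrace, hA, hB]
    _ ≤ τ - c * A - c * B + (c*c) * (τ * B) := by
        have := mul_le_mul_of_nonneg_left hTle hc2
        linarith
    _ = τ - (2*α - α^2) * S / (2*τ) := hfinal
end

section
/- Let H ∈ ℝ^{n×n} be a symmetric positive semidefinite matrix with tr(H) > 0 and let c > 0. Suppose L ∈ ℝ^{n×n} minimizes tr(H LᵀL) over the set of unit lower triangular matrices satisfying e_iᵀLᵀLe_i ≤ 1 + c for all i. Set α = min(1, √c) and Δ = ‖H‖_off²/(2·tr(H)). Then tr(H LᵀL) ≤ tr(H) − (2α − α²)·Δ ≤ (1 + (1 − α)²)·(tr(H) − Δ) ≤ 2·(tr(H) − Δ). In particular, if c ≥ 1 then tr(H LᵀL) ≤ tr(H) − Δ. -/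
open Matrix

lemma stmt8_entry {n : ℕ} {H : Matrix (Fin n) (Fin n) ℝ} (hH : H.PosSemidef) (i j : Fin n) :
    H i j ^ 2 ≤ H i i * H j j := by
  have hsym : ∀ a b, H a b = H b a := fun a b =>
    (congrFun (congrFun hH.1 a) b).symm.trans (by simp [conjTranspose_apply])
  have key : ∀ t : ℝ, 0 ≤ H j j * (t * t) + (2 * H i j) * t + H i i := by
    intro t
    have h := hH.dotProduct_mulVec_nonneg (fun k => (if k = i then (1:ℝ) else 0) + t * (if k = j then 1 else 0))
    simp only [dotProduct, mulVec, Pi.star_apply, star_trivial] at h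
    have e : ∀ p : Fin n, (∑ q, H p q * ((if q = i then (1:ℝ) else 0) + t * (if q = j then 1 else 0))) = H p i + t * H p j := by
      intro p
      simp [mul_add, Finset.sum_add_distrib, mul_ite, mul_comm, Finset.mul_sum, mul_left_comm]
    simp only [e] at h
    have e2 : (∑ p, ((if p = i then (1:ℝ) else 0) + t * (if p = j then 1 else 0)) * (H p i + t * H p j)) = (H i i + t * H i j) + t * (H j i + t * H j j) := by
      simp [add_mul, Finset.sum_add_distrib, ite_mul, mul_ite, Finset.mul_sum, mul_left_comm]
    rw [e2] at h
    rw [hsym j i] at h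
    nlinarith [h]
  have := discrim_le_zero key
  rw [discrim] at this
  nlinarith [this]

lemma stmt8_quad {n : ℕ} {H : Matrix (Fin n) (Fin n) ℝ} (hH : H.PosSemidef) (x : Fin n → ℝ) :
    ∑ j, ∑ k, x j * H j k * x k ≤ (∑ j, H j j) * (∑ j, x j ^ 2) := by
  have hdiag : ∀ i, 0 ≤ H i i := fun i => by simpa using hH.dotProduct_mulVec_nonneg (Pi.single i 1)
  set g : Fin n → ℝ := fun j => |x j| * Real.sqrt (H j j) with hg
  have habs : ∀ j k, x j * H j k * x k ≤ g j * g k := by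
    intro j k
    have h1 : |H j k| ≤ Real.sqrt (H j j) * Real.sqrt (H k k) := by
      rw [← Real.sqrt_sq_eq_abs, ← Real.sqrt_mul (hdiag j)]
      exact Real.sqrt_le_sqrt (stmt8_entry hH j k)
    calc x j * H j k * x k ≤ |x j * H j k * x k| := le_abs_self _
      _ = |x j| * |H j k| * |x k| := by rw [abs_mul, abs_mul]
      _ ≤ |x j| * (Real.sqrt (H j j) * Real.sqrt (H k k)) * |x k| := by
          apply mul_le_mul_of_nonneg_right _ (abs_nonneg _)
          exact mul_le_mul_of_nonneg_left h1 (abs_nonneg _)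
      _ = g j * g k := by rw [hg]; ring
  calc ∑ j, ∑ k, x j * H j k * x k ≤ ∑ j, ∑ k, g j * g k :=
        Finset.sum_le_sum fun j _ => Finset.sum_le_sum fun k _ => habs j k
    _ = (∑ j, g j) * (∑ k, g k) := by rw [Finset.sum_mul_sum]
    _ = (∑ j, |x j| * Real.sqrt (H j j)) ^ 2 := by rw [sq]
    _ ≤ (∑ j, |x j| ^ 2) * (∑ j, Real.sqrt (H j j) ^ 2) :=
        Finset.sum_mul_sq_le_sq_mul_sq _ _ _
    _ = (∑ j, H j j) * (∑ j, x j ^ 2) := by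
        rw [mul_comm]
        congr 1
        · exact Finset.sum_congr rfl fun j _ => Real.sq_sqrt (hdiag j)
        · exact Finset.sum_congr rfl fun j _ => sq_abs (x j)

lemma stmt8_traceform {n : ℕ} (H A : Matrix (Fin n) (Fin n) ℝ) :
    Matrix.trace (H * Aᵀ * A) = ∑ i, ∑ j, ∑ k, A i j * H j k * A i k := by
  rw [Matrix.trace_mul_comm]
  simp only [Matrix.trace, Matrix.diag, mul_apply, transpose_apply, Finset.sum_mul,
    Finset.mul_sum]
  refine Finset.sum_congr rfl fun i _ => ?_
  refine Finset.sum_congr rfl fun j _ => Finset.sum_congr rfl fun k _ => by ring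

/-- Constrained LDL bounds, Lemma `thm:trace-bound`.
Let `H` be symmetric PSD with `tr H > 0`, `c > 0`, and let `L` minimize `tr(H LᵀL)`
over unit lower triangular matrices with `e_iᵀLᵀLe_i ≤ 1 + c` for all `i`.
With `α = min(1, √c)` and `Δ = ‖H‖_off²/(2 tr H)`:
`tr(H LᵀL) ≤ tr H − (2α − α²)Δ ≤ (1 + (1 − α)²)(tr H − Δ) ≤ 2(tr H − Δ)`,
and if `c ≥ 1` then `tr(H LᵀL) ≤ tr H − Δ`. -/
theorem stmt8 {n : ℕ} (H : Matrix (Fin n) (Fin n) ℝ) (hH : H.PosSemidef)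
    (htr : 0 < Matrix.trace H) (c : ℝ) (hc : 0 < c)
    (L : Matrix (Fin n) (Fin n) ℝ)
    (hLdiag : ∀ i, L i i = 1) (hLtri : ∀ i j : Fin n, i < j → L i j = 0)
    (hLcon : ∀ i, (Lᵀ * L) i i ≤ 1 + c)
    (hLmin : ∀ L' : Matrix (Fin n) (Fin n) ℝ,
      (∀ i, L' i i = 1) → (∀ i j : Fin n, i < j → L' i j = 0) →
      (∀ i, (L'ᵀ * L') i i ≤ 1 + c) →
      Matrix.trace (H * Lᵀ * L) ≤ Matrix.trace (H * L'ᵀ * L'))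
    (α Δ : ℝ) (hα : α = min 1 (Real.sqrt c))
    (hΔ : Δ = (∑ i, ∑ j, if i = j then 0 else (H i j)^2) / (2 * Matrix.trace H)) :
    Matrix.trace (H * Lᵀ * L) ≤ Matrix.trace H - (2*α - α^2) * Δ ∧
    Matrix.trace H - (2*α - α^2) * Δ ≤ (1 + (1 - α)^2) * (Matrix.trace H - Δ) ∧
    (1 + (1 - α)^2) * (Matrix.trace H - Δ) ≤ 2 * (Matrix.trace H - Δ) ∧
    (1 ≤ c → Matrix.trace (H * Lᵀ * L) ≤ Matrix.trace H - Δ) := by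
  have hsym : ∀ a b, H a b = H b a := fun a b =>
    (congrFun (congrFun hH.1 a) b).symm.trans (by simp [conjTranspose_apply])
  have hdiag : ∀ i, 0 ≤ H i i := fun i => by simpa using hH.dotProduct_mulVec_nonneg (Pi.single i 1)
  set s : ℝ := Matrix.trace H with hsdef
  have hs : s = ∑ i, H i i := by simp [hsdef, Matrix.trace, Matrix.diag]
  set F2 : ℝ := ∑ i, ∑ j, if i = j then 0 else (H i j)^2 with hF2def
  have hF2nn : 0 ≤ F2 := by
    apply Finset.sum_nonneg; intro i _; apply Finset.sum_nonneg; intro j _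
    split <;> positivity
  -- F2 ≤ s^2
  have hF2s : F2 ≤ s ^ 2 := by
    have : F2 ≤ ∑ i, ∑ j, H i i * H j j := by
      apply Finset.sum_le_sum; intro i _; apply Finset.sum_le_sum; intro j _
      split
      · exact mul_nonneg (hdiag i) (hdiag j)
      · exact stmt8_entry hH i j
    calc F2 ≤ ∑ i, ∑ j, H i i * H j j := this
      _ = (∑ i, H i i) * (∑ j, H j j) := by rw [← Finset.sum_mul_sum]
      _ = s ^ 2 := by rw [hs, sq]
  -- strict lower triangle column sums
  set T : Fin n → ℝ := fun i => ∑ k, if k < i then H i k ^ 2 else 0 with hTdef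
  have hTnn : ∀ i, 0 ≤ T i := by
    intro i; apply Finset.sum_nonneg; intro k _; split <;> positivity
  have hsplit : F2 = 2 * ∑ i, T i := by
    have h1 : F2 = (∑ i, ∑ j, if j < i then H i j ^ 2 else 0)
        + (∑ i, ∑ j, if i < j then H i j ^ 2 else 0) := by
      rw [hF2def, ← Finset.sum_add_distrib]
      refine Finset.sum_congr rfl fun i _ => ?_
      rw [← Finset.sum_add_distrib]
      refine Finset.sum_congr rfl fun j _ => ?_
      rcases lt_trichotomy i j with h | h | h
      · simp [h, ne_of_lt h, not_lt_of_gt h]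
      · simp [h]
      · simp [h, (ne_of_lt h).symm, not_lt_of_gt h]
    have h2 : (∑ i, ∑ j, if i < j then H i j ^ 2 else 0)
        = ∑ i, ∑ j, if j < i then H i j ^ 2 else 0 := by
      rw [Finset.sum_comm]
      refine Finset.sum_congr rfl fun i _ => Finset.sum_congr rfl fun j _ => ?_
      rw [hsym j i]
    rw [h1, h2, hTdef]; ring
  -- α facts
  have hsq : Real.sqrt c > 0 := Real.sqrt_pos.mpr hc
  have hα0 : 0 < α := by rw [hα]; exact lt_min one_pos hsq
  have hα1 : α ≤ 1 := by rw [hα]; exact min_le_left _ _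
  have hαc : α ^ 2 ≤ c := by
    have h1 : α ≤ Real.sqrt c := by rw [hα]; exact min_le_right _ _
    nlinarith [Real.sq_sqrt hc.le, Real.sqrt_nonneg c]
  set β : ℝ := α / s with hβdef
  -- the competitor
  set L' : Matrix (Fin n) (Fin n) ℝ :=
    Matrix.of (fun i j => (if i = j then (1:ℝ) else 0) + (if j < i then -β * H i j else 0))
    with hL'def
  have hL'app : ∀ i j, L' i j = (if i = j then (1:ℝ) else 0) + (if j < i then -β * H i j else 0) :=
    fun i j => rfl
  have hL'diag : ∀ i, L' i i = 1 := by intro i; simp [hL'app]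
  have hL'tri : ∀ i j : Fin n, i < j → L' i j = 0 := by
    intro i j h; simp [hL'app, ne_of_lt h, not_lt_of_gt h]
  -- column sums of squares
  have hcol : ∀ j, (∑ i, if j < i then H i j ^ 2 else 0) ≤ F2 := by
    intro j
    rw [hF2def]
    apply Finset.sum_le_sum
    intro i _
    have h1 : (if j < i then H i j ^ 2 else 0) ≤ (if i = j then 0 else H i j ^ 2) := by
      split_ifs with h1 h2 h3
      · exact absurd (h2 ▸ h1) (lt_irrefl i)
      · exact le_rfl
      · exact le_rfl
      · positivity
    refine h1.trans (Finset.single_le_sum (f := fun j' => if i = j' then 0 else H i j' ^ 2)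
      (fun j' _ => by show (0:ℝ) ≤ (if i = j' then 0 else H i j' ^ 2); split <;> positivity) (Finset.mem_univ j))
  have hβF2 : β ^ 2 * F2 ≤ α ^ 2 := by
    rw [hβdef, div_pow]
    rw [div_mul_eq_mul_div, div_le_iff₀ (by positivity)]
    nlinarith [hF2s, sq_nonneg α, mul_le_mul_of_nonneg_left hF2s (sq_nonneg α)]
  have hL'con : ∀ i, (L'ᵀ * L') i i ≤ 1 + c := by
    intro j
    have e : (L'ᵀ * L') j j = ∑ i, L' i j * L' i j := by
      simp [mul_apply, transpose_apply]
    rw [e]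
    have e2 : ∀ i, L' i j * L' i j
        = (if i = j then (1:ℝ) else 0) + β ^ 2 * (if j < i then H i j ^ 2 else 0) := by
      intro i
      rw [hL'app]
      split_ifs with h1 h2
      · exact absurd (h1 ▸ h2) (lt_irrefl j)
      · ring
      · ring
      · ring
    simp only [e2]
    rw [Finset.sum_add_distrib, ← Finset.mul_sum]
    have e3 : (∑ i, if i = j then (1:ℝ) else 0) = 1 := by simp
    rw [e3]
    have : β ^ 2 * (∑ i, if j < i then H i j ^ 2 else 0) ≤ β ^ 2 * F2 :=
      mul_le_mul_of_nonneg_left (hcol j) (sq_nonneg β)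
    linarith [hβF2, hαc]
  -- main bound on the competitor's objective
  have hΔs : Δ * (2 * s) = F2 := by rw [hΔ]; field_simp
  have hper : ∀ i : Fin n, (∑ j, ∑ k, L' i j * H j k * L' i k)
      ≤ H i i - (2 * β - s * β ^ 2) * T i := by
    intro i
    set m : Fin n → ℝ := fun k => if k < i then -β * H i k else 0 with hm
    have e1 : (∑ j, ∑ k, L' i j * H j k * L' i k)
        = H i i + (∑ k, m k * H i k) + (∑ j, m j * H j i)
          + ∑ j, ∑ k, m j * H j k * m k := by
      have step : ∀ j k : Fin n, L' i j * H j k * L' i k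
          = (if i = j then (if i = k then H j k else 0) else 0)
            + (if i = j then m k * H j k else 0)
            + (if i = k then m j * H j k else 0)
            + m j * H j k * m k := by
        intro j k
        rw [hL'app, hL'app, hm]
        dsimp only
        split_ifs <;> ring
      simp only [step, Finset.sum_add_distrib, Finset.sum_ite_irrel, Finset.sum_const_zero,
        Finset.sum_ite_eq, Finset.mem_univ, if_true]
    have e2 : (∑ k, m k * H i k) = -β * T i := by
      rw [hTdef, hm, Finset.mul_sum]
      refine Finset.sum_congr rfl fun k _ => ?_
      dsimp only
      split_ifs <;> ring
    have e3 : (∑ j, m j * H j i) = -β * T i := by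
      rw [hTdef, hm, Finset.mul_sum]
      refine Finset.sum_congr rfl fun k _ => ?_
      dsimp only
      rw [hsym k i]
      split_ifs <;> ring
    have e4 : (∑ k, m k ^ 2) = β ^ 2 * T i := by
      rw [hTdef, hm, Finset.mul_sum]
      refine Finset.sum_congr rfl fun k _ => ?_
      dsimp only
      split_ifs <;> ring
    have e5 := stmt8_quad hH m
    rw [← hs, e4] at e5
    rw [e1, e2, e3]
    nlinarith [e5]
  have hmain : Matrix.trace (H * L'ᵀ * L') ≤ s - (2*α - α^2) * Δ := by
    rw [stmt8_traceform]
    have h6 : (∑ i, ∑ j, ∑ k, L' i j * H j k * L' i k)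
        ≤ ∑ i, (H i i - (2 * β - s * β ^ 2) * T i) :=
      Finset.sum_le_sum fun i _ => hper i
    have h7 : (∑ i, (H i i - (2 * β - s * β ^ 2) * T i))
        = s - (2 * β - s * β ^ 2) * ∑ i, T i := by
      rw [Finset.sum_sub_distrib, ← Finset.mul_sum, hs]
    have h8 : (2 * β - s * β ^ 2) * (∑ i, T i) = (2*α - α^2) * Δ := by
      have hT2 : (∑ i, T i) = F2 / 2 := by rw [hsplit]; ring
      rw [hT2, hβdef, hΔ]
      field_simp
    rw [h7, h8] at h6
    exact h6
  have hfirst : Matrix.trace (H * Lᵀ * L) ≤ s - (2*α - α^2) * Δ :=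
    (hLmin L' hL'diag hL'tri hL'con).trans hmain
  have hΔnn : 0 ≤ Δ := by
    rw [hΔ]
    apply div_nonneg _ (by positivity)
    apply Finset.sum_nonneg; intro i _; apply Finset.sum_nonneg; intro j _
    split <;> positivity
  have h2Δ : 2 * Δ ≤ s := by nlinarith [hΔs, hF2s, htr]
  refine ⟨hfirst, ?_, ?_, ?_⟩
  · linarith [mul_nonneg (sq_nonneg (1 - α)) (by linarith : (0:ℝ) ≤ s - 2*Δ)]
  · linarith [mul_nonneg (mul_nonneg hα0.le (by linarith : (0:ℝ) ≤ 2 - α))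
      (by linarith : (0:ℝ) ≤ s - Δ)]
  · intro h1c
    have hsc : 1 ≤ Real.sqrt c :=
      Real.le_sqrt_of_sq_le (by linarith)
    have hα1' : α = 1 := by rw [hα]; exact min_eq_left hsc
    rw [hα1'] at hfirst
    linarith [hfirst]
end

section
/- For ε > 0, let H_ε = [[ε², ε], [ε, 1]] ∈ ℝ^{2×2}. Then H_ε is positive semidefinite, the minimum of tr(H_ε LᵀL) over unit upper triangular 2×2 matrices L equals 1, and consequently ‖H_ε‖_off² / (tr(H_ε)·(tr(H_ε) − 1)) = 2/(1 + ε²), which tends to 2 as ε → 0. Hence the constant 1/2 in the bound tr(H LᵀL) ≤ tr(H) − ‖H‖_off²/(2·tr(H)) cannot be improved. -/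
/-!
`H_ε = v vᵀ` with `v = (ε, 1)`, so `tr(H_ε LᵀL) = ‖L v‖²`. For unit upper triangular `L` the
second coordinate of `L v` is `1` and the first is `ε + L₀₁`, which vanishes for `L₀₁ = -ε`;
hence the minimum is `1 = tr D`, while `tr H_ε = 1 + ε²` and `‖H_ε‖_off² = 2ε²`.
-/

open Matrix

theorem trace_vecMulVec_self_mul_transpose_mul {m n R : Type*} [Fintype m] [Fintype n]
    [CommSemiring R] (v : m → R) (L : Matrix n m R) :
    trace (vecMulVec v v * Lᵀ * L) = (L *ᵥ v) ⬝ᵥ (L *ᵥ v) := by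
  rw [vecMulVec_mul, vecMulVec_mul, trace_vecMulVec, vecMul_transpose, dotProduct_comm,
    ← dotProduct_mulVec]

theorem eq_fin_two_of_diag_eq_one_of_lower_eq_zero {R : Type*} [Zero R] [One R]
    {L : Matrix (Fin 2) (Fin 2) R} (hdiag : ∀ i, L i i = 1)
    (hlower : ∀ i j : Fin 2, j < i → L i j = 0) :
    L = !![1, L 0 1; 0, 1] := by
  ext i j
  fin_cases i <;> fin_cases j
  all_goals simp [hdiag, hlower 1 0 Fin.zero_lt_one]

theorem isLeast_trace_vecMulVec_self_mul_unitUpperTriangular (v : Fin 2 → ℝ) (hv : v 1 ≠ 0) :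
    IsLeast {t : ℝ | ∃ L : Matrix (Fin 2) (Fin 2) ℝ,
        (∀ i, L i i = 1) ∧ (∀ i j : Fin 2, j < i → L i j = 0) ∧
        t = trace (vecMulVec v v * Lᵀ * L)} (v 1 ^ 2) := by
  have trace_eq (a : ℝ) : trace (vecMulVec v v * (!![1, a; 0, 1])ᵀ * !![1, a; 0, 1]) =
      (v 0 + a * v 1) ^ 2 + v 1 ^ 2 := by
    rw [trace_vecMulVec_self_mul_transpose_mul]
    simp [dotProduct, Fin.sum_univ_two, mulVec, sq]
  constructor
  · refine ⟨!![1, -v 0 / v 1; 0, 1], fun i => by fin_cases i <;> rfl, ?_, ?_⟩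
    · intro i j hij
      fin_cases i <;> fin_cases j <;> simp_all
    · rw [trace_eq]
      field_simp
      ring
  · rintro t ⟨L, hdiag, hlower, rfl⟩
    rw [eq_fin_two_of_diag_eq_one_of_lower_eq_zero hdiag hlower, trace_eq]
    nlinarith [sq_nonneg (v 0 + L 0 1 * v 1)]

theorem fin_two_sq_eq_vecMulVec (a : ℝ) : !![a ^ 2, a; a, 1] = vecMulVec ![a, 1] ![a, 1] := by
  ext i j
  fin_cases i <;> fin_cases j <;> simp [sq]

theorem tendsto_two_div_one_add_sq :
    Filter.Tendsto (fun ε : ℝ => 2 / (1 + ε ^ 2)) (nhdsWithin 0 (Set.Ioi 0)) (nhds 2) := by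
  have hcont : Continuous fun ε : ℝ => 2 / (1 + ε ^ 2) :=
    continuous_const.div (by fun_prop) fun ε => by positivity
  exact (hcont.tendsto' 0 2 (by norm_num)).mono_left nhdsWithin_le_nhds

/-- Sharpness of the factor 1/2 in the constrained-LDL bound.
For `ε > 0`, `H_ε = [[ε², ε], [ε, 1]]` is PSD, the minimum of `tr(H_ε LᵀL)` over
unit upper triangular `2×2` matrices `L` equals `1`, and
`‖H_ε‖_off² / (tr(H_ε)·(tr(H_ε) − 1)) = 2/(1 + ε²)`, which tends to `2` as `ε → 0⁺`. -/
theorem stmt9 :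
    (∀ ε : ℝ, 0 < ε →
      (!![ε^2, ε; ε, 1] : Matrix (Fin 2) (Fin 2) ℝ).PosSemidef ∧
      IsLeast {t : ℝ | ∃ L : Matrix (Fin 2) (Fin 2) ℝ,
          (∀ i, L i i = 1) ∧ (∀ i j : Fin 2, j < i → L i j = 0) ∧
          t = Matrix.trace ((!![ε^2, ε; ε, 1] : Matrix (Fin 2) (Fin 2) ℝ) * Lᵀ * L)} 1 ∧
      (∑ i, ∑ j, if i = j then (0:ℝ)
          else ((!![ε^2, ε; ε, 1] : Matrix (Fin 2) (Fin 2) ℝ) i j)^2) /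
        (Matrix.trace (!![ε^2, ε; ε, 1] : Matrix (Fin 2) (Fin 2) ℝ) *
          (Matrix.trace (!![ε^2, ε; ε, 1] : Matrix (Fin 2) (Fin 2) ℝ) - 1))
        = 2 / (1 + ε^2)) ∧
    Filter.Tendsto (fun ε : ℝ => 2 / (1 + ε^2)) (nhdsWithin 0 (Set.Ioi 0)) (nhds 2) := by
  refine ⟨fun ε hε => ⟨?_, ?_, ?_⟩, tendsto_two_div_one_add_sq⟩
  · simpa [fin_two_sq_eq_vecMulVec] using posSemidef_vecMulVec_self_star ![ε, 1]
  · simpa [fin_two_sq_eq_vecMulVec] using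
      isLeast_trace_vecMulVec_self_mul_unitUpperTriangular ![ε, 1] one_ne_zero
  · have off_diag : (∑ i, ∑ j, if i = j then (0:ℝ)
        else ((!![ε^2, ε; ε, 1] : Matrix (Fin 2) (Fin 2) ℝ) i j)^2) = 2 * ε ^ 2 := by
      simp [Fin.sum_univ_two]
      ring
    have trace_eq : trace (!![ε^2, ε; ε, 1] : Matrix (Fin 2) (Fin 2) ℝ) = 1 + ε ^ 2 := by
      simp [trace_fin_two, add_comm]
    rw [off_diag, trace_eq, add_sub_cancel_left]
    field_simp
end

section
/- Let H ∈ ℝ^{n×n} be a symmetric positive definite matrix with LDL decomposition H = (U + I) D (U + I)ᵀ, where U is strictly upper triangular and D is diagonal with nonnegative entries. Set L* = (U + I)^{-1}. Then tr(H L*ᵀ L*) = tr(D), and for every unit upper triangular matrix L ∈ ℝ^{n×n}, tr(H LᵀL) ≥ tr(D). That is, the true LDL factor minimizes tr(H LᵀL) over unit upper triangular matrices. -/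
open Matrix

lemma aux_trace_ge {n : ℕ} (M D : Matrix (Fin n) (Fin n) ℝ)
    (hD : D.IsDiag) (hDnn : ∀ i, 0 ≤ D i i) (hMdiag : ∀ i, M i i = 1) :
    Matrix.trace D ≤ Matrix.trace (M * D * Mᵀ) := by
  have hDd : Matrix.diagonal D.diag = D := hD.diagonal_diag
  rw [← hDd]
  have : Matrix.trace (M * Matrix.diagonal D.diag * Mᵀ)
      = ∑ i, ∑ k, M i k * D.diag k * M i k := by
    simp [Matrix.trace, Matrix.diag, Matrix.mul_apply, Matrix.transpose_apply,
      Matrix.diagonal_apply, Finset.sum_mul, ite_mul, mul_ite]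
  rw [this]
  have htr : Matrix.trace (Matrix.diagonal D.diag) = ∑ i, D.diag i := by
    simp [Matrix.trace, Matrix.diag]
  rw [htr]
  apply Finset.sum_le_sum
  intro i _
  have h1 : D.diag i = M i i * D.diag i * M i i := by
    rw [hMdiag i]; ring
  rw [h1]
  apply Finset.single_le_sum (f := fun k => M i k * D.diag k * M i k)
  · intro k _
    have : M i k * D.diag k * M i k = D.diag k * (M i k)^2 := by ring
    rw [this]
    exact mul_nonneg (hDnn k) (sq_nonneg _)
  · exact Finset.mem_univ i

/-- The true LDL factor minimizes `tr(H LᵀL)`.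
Let `H` be symmetric positive definite with LDL decomposition
`H = (U + I) D (U + I)ᵀ`, `U` strictly upper triangular, `D` diagonal with nonnegative
entries, and set `L* = (U + I)⁻¹`. Then `tr(H L*ᵀ L*) = tr D`, and every unit upper
triangular `L` satisfies `tr(H LᵀL) ≥ tr D`. -/
theorem stmt10 {n : ℕ} (H U D : Matrix (Fin n) (Fin n) ℝ) (hH : H.PosDef)
    (hU : ∀ i j : Fin n, ¬ i < j → U i j = 0)
    (hD : D.IsDiag) (hDnn : ∀ i, 0 ≤ D i i)
    (hLDL : H = (U + 1) * D * (U + 1)ᵀ) :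
    Matrix.trace (H * ((U + 1)⁻¹)ᵀ * (U + 1)⁻¹) = Matrix.trace D ∧
    ∀ L : Matrix (Fin n) (Fin n) ℝ,
      (∀ i, L i i = 1) → (∀ i j : Fin n, j < i → L i j = 0) →
      Matrix.trace D ≤ Matrix.trace (H * Lᵀ * L) := by
  set V := U + 1 with hVdef
  have hVlow : ∀ i j : Fin n, j < i → V i j = 0 := by
    intro i j hij
    have := hU i j (not_lt.mpr hij.le)
    simp [hVdef, Matrix.add_apply, Matrix.one_apply, this, hij.ne']
  have hVdiag : ∀ i, V i i = 1 := by
    intro i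
    have := hU i i (lt_irrefl i)
    simp [hVdef, Matrix.add_apply, Matrix.one_apply, this]
  have hdet : V.det = 1 := by
    have hBT : V.BlockTriangular id := fun i j h => hVlow i j h
    rw [Matrix.det_of_upperTriangular hBT]
    simp [hVdiag]
  have hVu : IsUnit V.det := by rw [hdet]; exact isUnit_one
  have hVTu : IsUnit Vᵀ.det := by rwa [Matrix.det_transpose]
  have hVinv : V⁻¹ * V = 1 := Matrix.nonsing_inv_mul V hVu
  have hVTinv : Vᵀ * (Vᵀ)⁻¹ = 1 := Matrix.mul_nonsing_inv Vᵀ hVTu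
  have key : V⁻¹ * H * (V⁻¹)ᵀ = D := by
    rw [hLDL, Matrix.transpose_nonsing_inv]
    have : V⁻¹ * (V * D * Vᵀ) * (Vᵀ)⁻¹ = (V⁻¹ * V) * D * (Vᵀ * (Vᵀ)⁻¹) := by
      simp only [Matrix.mul_assoc]
    rw [this, hVinv, hVTinv, Matrix.one_mul, Matrix.mul_one]
  constructor
  · rw [Matrix.trace_mul_cycle, key]
  · intro L hLdiag hLlow
    have hM : ∀ i, (L * V) i i = 1 := by
      intro i
      rw [Matrix.mul_apply]
      rw [Finset.sum_eq_single i]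
      · rw [hLdiag i, hVdiag i, one_mul]
      · intro k _ hk
        rcases lt_or_gt_of_ne hk with h | h
        · rw [hLlow i k h, zero_mul]
        · rw [hVlow k i h, mul_zero]
      · intro h; exact absurd (Finset.mem_univ i) h
    have heq : H * Lᵀ * L = V * D * Vᵀ * Lᵀ * L := by rw [hLDL]
    have : Matrix.trace (H * Lᵀ * L) = Matrix.trace ((L * V) * D * (L * V)ᵀ) := by
      rw [heq, Matrix.trace_mul_cycle, Matrix.transpose_mul]
      congr 1
      simp only [Matrix.mul_assoc]
    rw [this]
    exact aux_trace_ge (L * V) D hD hDnn hM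
end

section
/- Let H ∈ ℝ^{n×n} be a symmetric positive semidefinite matrix with spectral decomposition H = U Λ Uᵀ (U orthogonal, Λ = diag(λ_1, …, λ_n), λ_i ≥ 0), let L ∈ ℝ^{n×n}, and let E be a random m×n real matrix on a probability space. Suppose that for every i ∈ {1,…,n}, j ∈ {1,…,m}, and every δ ∈ (0,1], P( |e_jᵀ E U e_i| ≥ ‖L U e_i‖ · √((1/2)·log(2/δ)) ) ≤ δ. Then for every δ ∈ (0,1], with probability at least 1 − δ, tr(E H Eᵀ) ≤ m · tr(H LᵀL) · (1/2)·log(2mn/δ). -/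
open Matrix MeasureTheory

private lemma trace_mul_diagonal_mul_transpose {p q : ℕ}
    (A : Matrix (Fin p) (Fin q) ℝ) (d : Fin q → ℝ) :
    Matrix.trace (A * Matrix.diagonal d * Aᵀ) = ∑ i, d i * ∑ j, (A j i)^2 := by
  simp only [Matrix.trace, Matrix.diag, Matrix.mul_apply, Matrix.transpose_apply,
    Matrix.diagonal_apply, mul_ite, mul_zero, Finset.sum_ite_eq', Finset.mem_univ,
    if_true]
  rw [Finset.sum_comm]
  refine Finset.sum_congr rfl fun i _ => ?_
  rw [Finset.mul_sum]
  exact Finset.sum_congr rfl fun j _ => by ring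

/-- High-probability GPTQ-style error bound from per-coordinate
tails. Let `H = U Λ Uᵀ` (`U` orthogonal, `λᵢ ≥ 0`), `L ∈ ℝ^{n×n}`, and `E` a random
`m×n` matrix such that for all `i, j` and `δ ∈ (0,1]`,
`P(|eⱼᵀ E U eᵢ| ≥ ‖L U eᵢ‖·√((1/2)log(2/δ))) ≤ δ`. Then for every `δ ∈ (0,1]`, with
probability at least `1 − δ`, `tr(E H Eᵀ) ≤ m · tr(H LᵀL) · (1/2)·log(2mn/δ)`. -/
theorem stmt15 {m n : ℕ} {Ω : Type*} [MeasureSpace Ω]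
    [IsProbabilityMeasure (volume : Measure Ω)]
    (U : Matrix (Fin n) (Fin n) ℝ) (hU : Uᵀ * U = 1)
    (lam : Fin n → ℝ) (hlam : ∀ i, 0 ≤ lam i)
    (H : Matrix (Fin n) (Fin n) ℝ)
    (hH : H = U * Matrix.diagonal lam * Uᵀ)
    (L : Matrix (Fin n) (Fin n) ℝ)
    (E : Ω → Matrix (Fin m) (Fin n) ℝ)
    (htail : ∀ (i : Fin n) (j : Fin m) (δ : ℝ), 0 < δ → δ ≤ 1 →
      volume {ω | Real.sqrt (∑ k, ((L * U) k i)^2)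
          * Real.sqrt (1/2 * Real.log (2/δ)) ≤ |(E ω * U) j i|}
        ≤ ENNReal.ofReal δ) :
    ∀ δ : ℝ, 0 < δ → δ ≤ 1 →
      1 - ENNReal.ofReal δ ≤
        volume {ω | Matrix.trace (E ω * H * (E ω)ᵀ)
          ≤ (m : ℝ) * Matrix.trace (H * Lᵀ * L)
            * (1/2 * Real.log (2 * m * n / δ))} := by
  intro δ hδ hδ1
  rcases Nat.eq_zero_or_pos m with hm | hm
  · subst hm
    refine le_trans tsub_le_self ?_
    have hset : {ω : Ω | Matrix.trace (E ω * H * (E ω)ᵀ)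
          ≤ ((0:ℕ) : ℝ) * Matrix.trace (H * Lᵀ * L)
            * (1/2 * Real.log (2 * (0:ℕ) * n / δ))} = Set.univ := by
      ext ω; simp [Matrix.trace]
    rw [hset, measure_univ]
  rcases Nat.eq_zero_or_pos n with hn | hn
  · subst hn
    refine le_trans tsub_le_self ?_
    have hset : {ω : Ω | Matrix.trace (E ω * H * (E ω)ᵀ)
          ≤ (m : ℝ) * Matrix.trace (H * Lᵀ * L)
            * (1/2 * Real.log (2 * m * (0:ℕ) / δ))} = Set.univ := by
      ext ω; simp [Matrix.trace, Matrix.mul_apply]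
    rw [hset, measure_univ]
  -- main case
  have hm' : (1:ℝ) ≤ (m:ℝ) := by exact_mod_cast hm
  have hn' : (1:ℝ) ≤ (n:ℝ) := by exact_mod_cast hn
  have hmnpos : (0:ℝ) < (m:ℝ) * n := by positivity
  have hmn1 : (1:ℝ) ≤ (m:ℝ) * n := le_trans hm' (le_mul_of_one_le_right (by positivity) hn')
  set δ' : ℝ := δ / ((m:ℝ) * n) with hδ'def
  have hδ'pos : 0 < δ' := div_pos hδ hmnpos
  have hδ'le : δ' ≤ 1 := (div_le_one hmnpos).mpr (le_trans hδ1 hmn1)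
  have hlog : 2 / δ' = 2 * (m:ℝ) * n / δ := by
    rw [hδ'def, div_div_eq_mul_div, ← mul_assoc]
  set c : ℝ := 1/2 * Real.log (2 * (m:ℝ) * n / δ) with hcdef
  have hc0 : 0 ≤ c := by
    apply mul_nonneg (by norm_num)
    apply Real.log_nonneg
    rw [le_div_iff₀ hδ]
    nlinarith
  set S : Fin n → Fin m → Set Ω := fun i j =>
    {ω | Real.sqrt (∑ k, ((L * U) k i)^2) * Real.sqrt c ≤ |(E ω * U) j i|} with hSdef
  have hbad : ∀ i j, volume (S i j) ≤ ENNReal.ofReal δ' := by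
    intro i j
    have h := htail i j δ' hδ'pos hδ'le
    rwa [hlog] at h
  have hbadle : volume (⋃ i, ⋃ j, S i j) ≤ ENNReal.ofReal δ := by
    calc volume (⋃ i, ⋃ j, S i j) ≤ ∑' i : Fin n, volume (⋃ j, S i j) :=
          measure_iUnion_le _
      _ ≤ ∑' i : Fin n, ∑' j : Fin m, volume (S i j) :=
          ENNReal.tsum_le_tsum fun i => measure_iUnion_le _
      _ ≤ ∑' i : Fin n, ∑' (_ : Fin m), ENNReal.ofReal δ' :=
          ENNReal.tsum_le_tsum fun i => ENNReal.tsum_le_tsum fun j => hbad i j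
      _ = (n : ENNReal) * ((m : ENNReal) * ENNReal.ofReal δ') := by
          simp [tsum_fintype, Finset.sum_const, nsmul_eq_mul, mul_assoc]
      _ = ENNReal.ofReal δ := by
          rw [← ENNReal.ofReal_natCast n, ← ENNReal.ofReal_natCast m,
            ← ENNReal.ofReal_mul (by positivity), ← ENNReal.ofReal_mul (by positivity)]
          congr 1
          rw [hδ'def]
          field_simp
  have hsub : (⋃ i, ⋃ j, S i j)ᶜ ⊆ {ω | Matrix.trace (E ω * H * (E ω)ᵀ)
          ≤ (m : ℝ) * Matrix.trace (H * Lᵀ * L) * (1/2 * Real.log (2 * m * n / δ))} := by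
    intro ω hω
    simp only [Set.mem_compl_iff, Set.mem_iUnion, not_exists, hSdef,
      Set.mem_setOf_eq, not_le] at hω
    have hpt : ∀ (i : Fin n) (j : Fin m),
        ((E ω * U) j i)^2 ≤ (∑ k, ((L * U) k i)^2) * c := by
      intro i j
      have h := hω i j
      have hs : (0:ℝ) ≤ ∑ k, ((L * U) k i)^2 := by positivity
      calc ((E ω * U) j i)^2 = |(E ω * U) j i|^2 := (sq_abs _).symm
        _ ≤ (Real.sqrt (∑ k, ((L * U) k i)^2) * Real.sqrt c)^2 :=
            pow_le_pow_left₀ (abs_nonneg _) h.le 2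
        _ = (∑ k, ((L * U) k i)^2) * c := by
            rw [mul_pow, Real.sq_sqrt hs, Real.sq_sqrt hc0]
    have htr1 : Matrix.trace (E ω * H * (E ω)ᵀ)
        = ∑ i, lam i * ∑ j, ((E ω * U) j i)^2 := by
      rw [show E ω * H * (E ω)ᵀ = (E ω * U) * Matrix.diagonal lam * (E ω * U)ᵀ by
        rw [hH]; simp only [Matrix.transpose_mul, Matrix.mul_assoc],
        trace_mul_diagonal_mul_transpose]
    have htr2 : Matrix.trace (H * Lᵀ * L)
        = ∑ i, lam i * ∑ k, ((L * U) k i)^2 := by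
      have h2 : Matrix.trace (H * Lᵀ * L)
          = Matrix.trace ((L * U) * Matrix.diagonal lam * (L * U)ᵀ) := by
        rw [hH, Matrix.trace_mul_comm]
        simp only [Matrix.transpose_mul, Matrix.mul_assoc]
      rw [h2, trace_mul_diagonal_mul_transpose]
    simp only [Set.mem_setOf_eq]
    rw [htr1, htr2]
    calc ∑ i, lam i * ∑ j, ((E ω * U) j i)^2
        ≤ ∑ i, lam i * ((m:ℝ) * ((∑ k, ((L * U) k i)^2) * c)) := by
          refine Finset.sum_le_sum fun i _ => ?_
          refine mul_le_mul_of_nonneg_left ?_ (hlam i)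
          calc ∑ j : Fin m, ((E ω * U) j i)^2
              ≤ ∑ _j : Fin m, (∑ k, ((L * U) k i)^2) * c :=
                Finset.sum_le_sum fun j _ => hpt i j
            _ = (m:ℝ) * ((∑ k, ((L * U) k i)^2) * c) := by
                simp [Finset.sum_const, nsmul_eq_mul]
      _ = (m:ℝ) * (∑ i, lam i * ∑ k, ((L * U) k i)^2) * c := by
          rw [Finset.mul_sum, Finset.sum_mul]
          exact Finset.sum_congr rfl fun i _ => by ring
  refine tsub_le_iff_right.mpr ?_
  calc (1:ENNReal) = volume (Set.univ : Set Ω) := measure_univ.symm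
    _ ≤ volume ({ω | Matrix.trace (E ω * H * (E ω)ᵀ)
          ≤ (m : ℝ) * Matrix.trace (H * Lᵀ * L) * (1/2 * Real.log (2 * m * n / δ))}
          ∪ ⋃ i, ⋃ j, S i j) := by
        refine measure_mono fun ω _ => ?_
        by_cases hω : ω ∈ ⋃ i, ⋃ j, S i j
        · exact Or.inr hω
        · exact Or.inl (hsub hω)
    _ ≤ volume {ω | Matrix.trace (E ω * H * (E ω)ᵀ)
          ≤ (m : ℝ) * Matrix.trace (H * Lᵀ * L) * (1/2 * Real.log (2 * m * n / δ))}
        + volume (⋃ i, ⋃ j, S i j) := measure_union_le _ _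
    _ ≤ _ := add_le_add le_rfl hbadle
end
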